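/- For every even cycle C_{2n+2} with n ≥ 1, QEC(C_{2n+2}) = 0. -/
import Mathlib

/-- Cyclic distance on the cycle C_m with vertices identified with Fin m. -/
def cycDist (m : ℕ) (i j : Fin m) : ℕ :=
  min ((i.val + m - j.val) % m) ((j.val + m - i.val) % m)

open Finset

instance (n : ℕ) : NeZero (2*n+2) := ⟨by omega⟩

noncomputable def gg (n : ℕ) (t i : Fin (2*n+2)) : ℝ := if (i - t).val < n+1 then 1 else 0

lemma mod_char (x m : ℕ) (hm : 0 < m) (hx : x < 2*m) : x % m = x ∧ x < m ∨ x % m + m = x := by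
  rcases lt_or_ge x m with h | h
  · exact Or.inl ⟨Nat.mod_eq_of_lt h, h⟩
  · right; rw [Nat.mod_eq_sub_mod h, Nat.mod_eq_of_lt (by omega)]; omega

lemma count_lemma (k s m : ℕ) (hk : 0 < k) (hm : m = 2*k) (hs : s < m) :
    ((Finset.range m).filter (fun v => v < k ∧ (v + s) % m < k)).card
      = k - min s (m - s) := by
  subst hm
  rcases le_or_gt s k with h | h
  · have he : (Finset.range (2*k)).filter (fun v => v < k ∧ (v + s) % (2*k) < k)
        = Finset.range (k - s) := by
      ext v
      simp only [mem_filter, mem_range]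
      constructor
      · rintro ⟨hv, hvk, hmod⟩
        rw [Nat.mod_eq_of_lt (by omega)] at hmod
        omega
      · intro hv
        refine ⟨by omega, by omega, ?_⟩
        rw [Nat.mod_eq_of_lt (by omega)]
        omega
    rw [he, card_range]; omega
  · have he : (Finset.range (2*k)).filter (fun v => v < k ∧ (v + s) % (2*k) < k)
        = Finset.Ico (2*k - s) k := by
      ext v
      simp only [mem_filter, mem_range, mem_Ico]
      constructor
      · rintro ⟨hv, hvk, hmod⟩
        rcases mod_char (v+s) (2*k) (by omega) (by omega) with ⟨h1,h2⟩ | h1 <;> omega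
      · rintro ⟨h1, h2⟩
        refine ⟨by omega, h2, ?_⟩
        have hle : 2*k ≤ v + s := by omega
        rw [Nat.mod_eq_sub_mod hle, Nat.mod_eq_of_lt (by omega)]
        omega
    rw [he, Nat.card_Ico]; omega

lemma fin_sub_val (m : ℕ) [NeZero m] (i t : Fin m) : (i - t).val = (i.val + m - t.val) % m := by
  rw [Fin.sub_def]; simp only; congr 1; omega

lemma cycDist_eq_min (n : ℕ) (i j : Fin (2*n+2)) :
    cycDist (2*n+2) i j = min ((j-i).val) ((2*n+2) - (j-i).val) := by
  have h0 := fin_sub_val (2*n+2) j i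
  have hi := i.is_lt
  have hj := j.is_lt
  have h2 := mod_char (i.val + (2*n+2) - j.val) (2*n+2) (by omega) (by omega)
  have h3 := mod_char (j.val + (2*n+2) - i.val) (2*n+2) (by omega) (by omega)
  unfold cycDist
  omega

lemma sum_gg (n : ℕ) (i j : Fin (2*n+2)) :
    ∑ t, gg n t i * gg n t j = (n+1 : ℝ) - cycDist (2*n+2) i j := by
  rw [← Equiv.sum_comp (Equiv.subLeft i) (fun t => gg n t i * gg n t j)]
  have habel : ∀ u : Fin (2*n+2), j - (i - u) = u + (j - i) := fun u => by abel
  simp only [Equiv.subLeft_apply, gg, sub_sub_cancel, habel, Fin.add_def,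
    ite_zero_mul_ite_zero, mul_one]
  rw [Fin.sum_univ_eq_sum_range
    (fun v => if v < n+1 ∧ (v + (j-i).val) % (2*n+2) < n+1 then (1:ℝ) else 0)]
  rw [Finset.sum_boole]
  rw [count_lemma (n+1) ((j-i).val) (2*n+2) (by omega) (by ring) ((j-i).is_lt)]
  rw [← cycDist_eq_min]
  have hle : cycDist (2*n+2) i j ≤ n + 1 := by
    rw [cycDist_eq_min]
    have := (j - i).is_lt
    omega
  push_cast [Nat.cast_sub hle]
  ring

theorem qec_even_cycle (n : ℕ) (hn : 1 ≤ n) :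
    IsGreatest {x : ℝ | ∃ f : Fin (2*n+2) → ℝ,
      (∑ i, f i ^ 2) = 1 ∧ (∑ i, f i) = 0 ∧
      x = ∑ i, ∑ j, (cycDist (2*n+2) i j : ℝ) * f i * f j} 0 := by
  constructor
  · obtain ⟨a, ha⟩ : ∃ a : Fin (2*n+2), a.val = 0 := ⟨⟨0, by omega⟩, rfl⟩
    obtain ⟨b, hb⟩ : ∃ b : Fin (2*n+2), b.val = 1 := ⟨⟨1, by omega⟩, rfl⟩
    obtain ⟨c, hc⟩ : ∃ c : Fin (2*n+2), c.val = n+1 := ⟨⟨n+1, by omega⟩, rfl⟩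
    obtain ⟨d, hd⟩ : ∃ d : Fin (2*n+2), d.val = n+2 := ⟨⟨n+2, by omega⟩, rfl⟩
    have hab : a ≠ b := by intro h; rw [h] at ha; omega
    have hac : a ≠ c := by intro h; rw [h] at ha; omega
    have had : a ≠ d := by intro h; rw [h] at ha; omega
    have hbc : b ≠ c := by intro h; rw [h] at hb; omega
    have hbd : b ≠ d := by intro h; rw [h] at hb; omega
    have hcd : c ≠ d := by intro h; rw [h] at hc; omega
    have Dcomm : ∀ p q : Fin (2*n+2), cycDist (2*n+2) p q = cycDist (2*n+2) q p :=
      fun p q => min_comm _ _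
    have Dself : ∀ p : Fin (2*n+2), cycDist (2*n+2) p p = 0 := by
      intro p
      unfold cycDist
      have h1 := mod_char (p.val + (2*n+2) - p.val) (2*n+2) (by omega) (by omega)
      omega
    have Dab : cycDist (2*n+2) a b = 1 := by
      unfold cycDist
      rw [ha, hb]
      have h1 := mod_char (0 + (2*n+2) - 1) (2*n+2) (by omega) (by omega)
      have h2 := mod_char (1 + (2*n+2) - 0) (2*n+2) (by omega) (by omega)
      omega
    have Dac : cycDist (2*n+2) a c = n+1 := by
      unfold cycDist
      rw [ha, hc]
      have h1 := mod_char (0 + (2*n+2) - (n+1)) (2*n+2) (by omega) (by omega)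
      have h2 := mod_char ((n+1) + (2*n+2) - 0) (2*n+2) (by omega) (by omega)
      omega
    have Dad : cycDist (2*n+2) a d = n := by
      unfold cycDist
      rw [ha, hd]
      have h1 := mod_char (0 + (2*n+2) - (n+2)) (2*n+2) (by omega) (by omega)
      have h2 := mod_char ((n+2) + (2*n+2) - 0) (2*n+2) (by omega) (by omega)
      omega
    have Dbc : cycDist (2*n+2) b c = n := by
      unfold cycDist
      rw [hb, hc]
      have h1 := mod_char (1 + (2*n+2) - (n+1)) (2*n+2) (by omega) (by omega)
      have h2 := mod_char ((n+1) + (2*n+2) - 1) (2*n+2) (by omega) (by omega)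
      omega
    have Dbd : cycDist (2*n+2) b d = n+1 := by
      unfold cycDist
      rw [hb, hd]
      have h1 := mod_char (1 + (2*n+2) - (n+2)) (2*n+2) (by omega) (by omega)
      have h2 := mod_char ((n+2) + (2*n+2) - 1) (2*n+2) (by omega) (by omega)
      omega
    have Dcd : cycDist (2*n+2) c d = 1 := by
      unfold cycDist
      rw [hc, hd]
      have h1 := mod_char ((n+1) + (2*n+2) - (n+2)) (2*n+2) (by omega) (by omega)
      have h2 := mod_char ((n+2) + (2*n+2) - (n+1)) (2*n+2) (by omega) (by omega)
      omega
    have Dba : cycDist (2*n+2) b a = 1 := by rw [Dcomm]; exact Dab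
    have Dca : cycDist (2*n+2) c a = n+1 := by rw [Dcomm]; exact Dac
    have Dda : cycDist (2*n+2) d a = n := by rw [Dcomm]; exact Dad
    have Dcb : cycDist (2*n+2) c b = n := by rw [Dcomm]; exact Dbc
    have Ddb : cycDist (2*n+2) d b = n+1 := by rw [Dcomm]; exact Dbd
    have Ddc : cycDist (2*n+2) d c = 1 := by rw [Dcomm]; exact Dcd
    have hcollapse : ∀ (F : Fin (2*n+2) → ℝ),
        ∑ j, F j * (((if j = a then (1:ℝ) else 0) - (if j = b then 1 else 0)
          + (if j = c then 1 else 0) - (if j = d then 1 else 0))/2)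
        = (F a - F b + F c - F d)/2 := by
      intro F
      simp only [← mul_div_assoc]
      rw [← Finset.sum_div]
      congr 1
      simp only [mul_sub, mul_add, mul_ite, mul_one, mul_zero,
        Finset.sum_sub_distrib, Finset.sum_add_distrib, Finset.sum_ite_eq',
        Finset.mem_univ, if_true]
    refine ⟨fun i => ((if i = a then (1:ℝ) else 0) - (if i = b then 1 else 0)
      + (if i = c then 1 else 0) - (if i = d then 1 else 0))/2, ?_, ?_, ?_⟩
    · have hpt : ∀ i : Fin (2*n+2),
          (((if i = a then (1:ℝ) else 0) - (if i = b then 1 else 0)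
            + (if i = c then 1 else 0) - (if i = d then 1 else 0))/2)^2
          = ((if i = a then (1:ℝ) else 0) + (if i = b then 1 else 0)
            + (if i = c then 1 else 0) + (if i = d then 1 else 0))/4 := by
        intro i
        split_ifs <;> simp_all <;> norm_num
      simp only [hpt]
      rw [← Finset.sum_div]
      simp only [Finset.sum_add_distrib, Finset.sum_ite_eq', Finset.mem_univ, if_true]
      norm_num
    · rw [← Finset.sum_div]
      simp only [Finset.sum_sub_distrib, Finset.sum_add_distrib, Finset.sum_ite_eq',
        Finset.mem_univ, if_true]
      norm_num
    · symm
      calc ∑ i, ∑ j, (cycDist (2*n+2) i j : ℝ)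
              * (((if i = a then (1:ℝ) else 0) - (if i = b then 1 else 0)
                + (if i = c then 1 else 0) - (if i = d then 1 else 0))/2)
              * (((if j = a then (1:ℝ) else 0) - (if j = b then 1 else 0)
                + (if j = c then 1 else 0) - (if j = d then 1 else 0))/2)
          = ∑ i, (((cycDist (2*n+2) i a : ℝ) - (cycDist (2*n+2) i b : ℝ)
              + (cycDist (2*n+2) i c : ℝ) - (cycDist (2*n+2) i d : ℝ))/2)
              * (((if i = a then (1:ℝ) else 0) - (if i = b then 1 else 0)
                + (if i = c then 1 else 0) - (if i = d then 1 else 0))/2) := by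
            apply Finset.sum_congr rfl; intro i _
            rw [hcollapse (fun j => (cycDist (2*n+2) i j : ℝ)
              * (((if i = a then (1:ℝ) else 0) - (if i = b then 1 else 0)
                + (if i = c then 1 else 0) - (if i = d then 1 else 0))/2))]
            ring
        _ = ((((cycDist (2*n+2) a a : ℝ) - (cycDist (2*n+2) a b : ℝ)
              + (cycDist (2*n+2) a c : ℝ) - (cycDist (2*n+2) a d : ℝ))/2)
            - (((cycDist (2*n+2) b a : ℝ) - (cycDist (2*n+2) b b : ℝ)
              + (cycDist (2*n+2) b c : ℝ) - (cycDist (2*n+2) b d : ℝ))/2)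
            + (((cycDist (2*n+2) c a : ℝ) - (cycDist (2*n+2) c b : ℝ)
              + (cycDist (2*n+2) c c : ℝ) - (cycDist (2*n+2) c d : ℝ))/2)
            - (((cycDist (2*n+2) d a : ℝ) - (cycDist (2*n+2) d b : ℝ)
              + (cycDist (2*n+2) d c : ℝ) - (cycDist (2*n+2) d d : ℝ))/2))/2 :=
            hcollapse _
        _ = 0 := by
            rw [Dself a, Dself b, Dself c, Dself d, Dab, Dac, Dad, Dba, Dbc, Dbd,
              Dca, Dcb, Dcd, Dda, Ddb, Ddc]
            push_cast
            ring
  · rintro x ⟨f, hf2, hf1, rfl⟩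
    have hD : ∀ i j : Fin (2*n+2),
        (cycDist (2*n+2) i j : ℝ) = (n+1) - ∑ t, gg n t i * gg n t j := by
      intro i j
      have := sum_gg n i j
      linarith
    have key : ∑ i, ∑ j, (cycDist (2*n+2) i j : ℝ) * f i * f j
        = (n+1) * ((∑ i, f i) * (∑ j, f j)) - ∑ t, (∑ i, gg n t i * f i)^2 := by
      simp only [hD, sub_mul, Finset.sum_sub_distrib]
      congr 1
      · calc ∑ i, ∑ j, ((n+1:ℝ) * f i * f j)
            = ∑ i, ((n+1:ℝ) * f i * ∑ j, f j) := by
              apply Finset.sum_congr rfl; intro i _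
              rw [← Finset.mul_sum]
          _ = (n+1) * ((∑ i, f i) * (∑ j, f j)) := by
              rw [← Finset.sum_mul, ← Finset.mul_sum]
              ring
      · calc ∑ i, ∑ j, ((∑ t, gg n t i * gg n t j) * f i * f j)
            = ∑ i, ∑ j, ∑ t, (gg n t i * f i) * (gg n t j * f j) := by
              apply Finset.sum_congr rfl; intro i _
              apply Finset.sum_congr rfl; intro j _
              rw [Finset.sum_mul, Finset.sum_mul]
              apply Finset.sum_congr rfl; intro t _
              ring
          _ = ∑ i, ∑ t, ∑ j, (gg n t i * f i) * (gg n t j * f j) := by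
              apply Finset.sum_congr rfl; intro i _
              exact Finset.sum_comm
          _ = ∑ t, ∑ i, ∑ j, (gg n t i * f i) * (gg n t j * f j) := Finset.sum_comm
          _ = ∑ t, (∑ i, gg n t i * f i)^2 := by
              apply Finset.sum_congr rfl; intro t _
              rw [sq, Finset.sum_mul_sum]
    rw [key, hf1]
    simp only [mul_zero, zero_mul, zero_sub, neg_nonpos]
    exact Finset.sum_nonneg fun t _ => sq_nonneg _
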